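/- arXiv:2305.08727 — 5 statements merged into one kernel-verified Lean document; each statement's English description precedes it below -/
import Mathlib

section
/- Let R be a binary relation over Σ* and G_R the directed graph with vertex set Σ* and edge set R. If R is automatic, G_R admits a k-regular coloring, and Id denotes the identity relation, then there exists a relation in k-REC separating R from Id. Conversely, if some k-REC relation separates R from Id, then G_R admits a k-regular coloring. -/
/-- A language (set of words) is regular if it is accepted by a DFA with finitely many states. -/
def IsRegularSet {α : Type} (L : Set (List α)) : Prop :=
  Language.IsRegular (L : Language α)

/-- Convolution `u ⊗ v` of two words: pad the shorter one with `none` (the blank symbol `⊥`)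
and read both synchronously. -/
def conv {α : Type} : List α → List α → List (Option α × Option α)
  | [], [] => []
  | [], b :: bs => (none, some b) :: conv [] bs
  | a :: as, [] => (some a, none) :: conv as []
  | a :: as, b :: bs => (some a, some b) :: conv as bs

/-- A relation on words is automatic if its convolution language is regular. -/
def IsAutomatic {α : Type} (R : Set (List α × List α)) : Prop :=
  IsRegularSet {w : List (Option α × Option α) | ∃ p ∈ R, w = conv p.1 p.2}

/-- A `k`-regular coloring of the graph `G_R = (Σ*, R)`: a partition of all words into
`k` regular languages, none of which contains both endpoints of an edge. -/
def IsKRegularColoring {α : Type} (k : ℕ) (R : Set (List α × List α)) : Prop :=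
  ∃ V : Fin k → Set (List α),
    (∀ w, ∃! i, w ∈ V i) ∧
    (∀ i, IsRegularSet (V i)) ∧
    (∀ i, (V i ×ˢ V i) ∩ R = ∅)

/-- A relation is in `k`-REC if it is a union of products of classes of a partition of `Σ*`
into `k` regular languages. -/
def InKREC {α : Type} (k : ℕ) (S : Set (List α × List α)) : Prop :=
  ∃ L : Fin k → Set (List α),
    (∀ w, ∃! i, w ∈ L i) ∧
    (∀ i, IsRegularSet (L i)) ∧
    ∃ P : Set (Fin k × Fin k), S = ⋃ p ∈ P, (L p.1 ×ˢ L p.2)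

/-- `S` separates `R` from `R'`. -/
def Separates {α : Type} (S R R' : Set (List α × List α)) : Prop :=
  R ⊆ S ∧ R' ∩ S = ∅

/-- For an automatic relation `R`, the graph `G_R` admits a `k`-regular coloring iff
some `k`-REC relation separates `R` from the identity. -/
theorem stmt4 (α : Type) [Fintype α] (k : ℕ) (R : Set (List α × List α))
    (hR : IsAutomatic R) :
    IsKRegularColoring k R ↔
      ∃ S : Set (List α × List α), InKREC k S ∧
        Separates S R {p : List α × List α | p.1 = p.2} := by
  constructor
  · rintro ⟨V, hpart, hreg, hcol⟩
    refine ⟨⋃ p ∈ {p : Fin k × Fin k | p.1 ≠ p.2}, (V p.1 ×ˢ V p.2),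
      ⟨V, hpart, hreg, {p | p.1 ≠ p.2}, rfl⟩, ?_, ?_⟩
    · rintro ⟨u, v⟩ huv
      obtain ⟨i, hi, hiu⟩ := hpart u
      obtain ⟨j, hj, hju⟩ := hpart v
      have hij : i ≠ j := by
        rintro rfl
        have : (u, v) ∈ (V i ×ˢ V i) ∩ R := ⟨⟨hi, hj⟩, huv⟩
        rw [hcol i] at this; exact this
      exact Set.mem_iUnion₂.mpr ⟨(i, j), hij, hi, hj⟩
    · ext ⟨u, v⟩
      simp only [Set.mem_inter_iff, Set.mem_setOf_eq, Set.mem_iUnion, Set.mem_prod,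
        Set.mem_empty_iff_false, iff_false, not_and]
      rintro rfl ⟨⟨i, j⟩, hij, hi, hj⟩
      obtain ⟨m, hm, hmu⟩ := hpart u
      exact hij ((hmu i hi).trans (hmu j hj).symm)
  · rintro ⟨S, ⟨L, hpart, hreg, P, rfl⟩, hsub, hid⟩
    refine ⟨L, hpart, hreg, fun i => ?_⟩
    ext ⟨u, v⟩
    simp only [Set.mem_inter_iff, Set.mem_prod, Set.mem_empty_iff_false, iff_false, not_and]
    rintro ⟨hu, hv⟩ huv
    obtain ⟨⟨a, b⟩, hP, ha, hb⟩ := Set.mem_iUnion₂.mp (hsub huv)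
    obtain ⟨m, _, hmu⟩ := hpart u
    obtain ⟨n, _, hnv⟩ := hpart v
    have hai : a = i := (hmu a ha).trans (hmu i hu).symm
    have hbi : b = i := (hnv b hb).trans (hnv i hv).symm
    have : (u, u) ∈ {p : List α × List α | p.1 = p.2} ∩ ⋃ p ∈ P, (L p.1 ×ˢ L p.2) := by
      refine ⟨rfl, Set.mem_iUnion₂.mpr ⟨(a, b), hP, ?_, ?_⟩⟩
      · rw [hai]; exact hu
      · rw [hbi]; exact hu
    rw [hid] at this; exact this
end

section
/- Let R₁, R₂ ⊆ Σ* × Σ* and suppose (A_1,…,A_k) is a partition of Σ* that is a proper coloring of the incompatibility graph of (R₁,R₂). Define S = ⋃_{i=1}^k (A_i × R₁[A_i]) ∪ (R₁⁻¹[A_i] × A_i), where R₁[X] = {v : ∃u∈X, (u,v)∈R₁} and R₁⁻¹[X] = {u : ∃v∈X, (u,v)∈R₁}. Then S separates R₁ from R₂, i.e., R₁ ⊆ S and R₂ ∩ S = ∅. -/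
/-- `u` is compatible with `u'` with respect to `(R₁, R₂)`. -/
def Compatible {α : Type} (R₁ R₂ : Set (List α × List α)) (u u' : List α) : Prop :=
  ∀ v : List α,
    ((u, v) ∈ R₁ → (u', v) ∉ R₂) ∧
    ((v, u) ∈ R₁ → (v, u') ∉ R₂) ∧
    ((u', v) ∈ R₁ → (u, v) ∉ R₂) ∧
    ((v, u') ∈ R₁ → (v, u) ∉ R₂)

/-- From a proper coloring `(A_1, …, A_k)` of the incompatibility graph of `(R₁, R₂)`,
the relation `S = ⋃ᵢ (A_i × R₁[A_i]) ∪ (R₁⁻¹[A_i] × A_i)` separates `R₁` from `R₂`. -/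
theorem stmt7 (α : Type) (R₁ R₂ : Set (List α × List α)) (k : ℕ)
    (A : Fin k → Set (List α)) (hpart : ∀ w, ∃! i, w ∈ A i)
    (hcol : ∀ i : Fin k, ∀ u ∈ A i, ∀ u' ∈ A i, Compatible R₁ R₂ u u') :
    R₁ ⊆ (⋃ i, (A i ×ˢ {v | ∃ u ∈ A i, (u, v) ∈ R₁}) ∪
              ({u | ∃ v ∈ A i, (u, v) ∈ R₁} ×ˢ A i)) ∧
    R₂ ∩ (⋃ i, (A i ×ˢ {v | ∃ u ∈ A i, (u, v) ∈ R₁}) ∪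
              ({u | ∃ v ∈ A i, (u, v) ∈ R₁} ×ˢ A i)) = ∅ := by
  constructor
  · rintro ⟨u, v⟩ huv
    obtain ⟨i, hi, -⟩ := hpart u
    exact Set.mem_iUnion.2 ⟨i, Or.inl ⟨hi, ⟨u, hi, huv⟩⟩⟩
  · ext ⟨u, v⟩
    simp only [Set.mem_inter_iff, Set.mem_iUnion, Set.mem_empty_iff_false, iff_false]
    rintro ⟨h2, i, hS⟩
    rcases hS with ⟨hu, u', hu', h1⟩ | ⟨⟨v', hv', h1⟩, hv⟩
    · exact (hcol i u' hu' u hu v).1 h1 h2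
    · exact (hcol i v' hv' v hv u).2.1 h1 h2
end

section
/- Let R be a symmetric relation over Σ* × Σ* disjoint from the identity, and suppose S = (A₁ × B₁) ∪ (B₂ × A₂) separates R from Id. Then S ∩ S⁻¹ also separates R from Id, and moreover S ∩ S⁻¹ = ((A₁∩A₂) × (B₁∩B₂)) ∪ ((B₁∩B₂) × (A₁∩A₂)). Consequently, R and Id are separable by a union of two products iff they have a separator of the form (A × B) ∪ (B × A). -/
/-- The identity relation on words. -/
def IdRel (α : Type) : Set (List α × List α) := {p | p.1 = p.2}

/-- If a symmetric relation `R` is separated from `Id` by `S = (A₁ × B₁) ∪ (B₂ × A₂)`, then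
`S ∩ S⁻¹` also separates `R` from `Id`, `S ∩ S⁻¹ = ((A₁∩A₂) × (B₁∩B₂)) ∪ ((B₁∩B₂) × (A₁∩A₂))`,
and consequently `R` and `Id` are separable by a union of two products iff they have a
separator of the form `(A × B) ∪ (B × A)`. -/
theorem stmt9 (α : Type) (R S : Set (List α × List α)) (A₁ B₁ A₂ B₂ : Set (List α))
    (hsym : ∀ u v : List α, (u, v) ∈ R → (v, u) ∈ R)
    (hS : S = (A₁ ×ˢ B₁) ∪ (B₂ ×ˢ A₂))
    (hsub : R ⊆ S) (hdisj : S ∩ IdRel α = ∅) :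
    (R ⊆ S ∩ {p | (p.2, p.1) ∈ S} ∧ (S ∩ {p | (p.2, p.1) ∈ S}) ∩ IdRel α = ∅) ∧
    S ∩ {p | (p.2, p.1) ∈ S} =
      ((A₁ ∩ A₂) ×ˢ (B₁ ∩ B₂)) ∪ ((B₁ ∩ B₂) ×ˢ (A₁ ∩ A₂)) ∧
    ((∃ X₁ Y₁ X₂ Y₂ : Set (List α),
        R ⊆ (X₁ ×ˢ Y₁) ∪ (X₂ ×ˢ Y₂) ∧ ((X₁ ×ˢ Y₁) ∪ (X₂ ×ˢ Y₂)) ∩ IdRel α = ∅) ↔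
      (∃ A B : Set (List α),
        R ⊆ (A ×ˢ B) ∪ (B ×ˢ A) ∧ ((A ×ˢ B) ∪ (B ×ˢ A)) ∩ IdRel α = ∅)) := by
  have hdisj' : ∀ w : List α, (w, w) ∉ S := by
    intro w hw
    have : (w, w) ∈ S ∩ IdRel α := ⟨hw, rfl⟩
    rw [hdisj] at this; exact this
  have hA₁B₁ : ∀ w, w ∈ A₁ → w ∈ B₁ → False := by
    intro w h1 h2; exact hdisj' w (hS ▸ Or.inl ⟨h1, h2⟩)
  have hA₂B₂ : ∀ w, w ∈ B₂ → w ∈ A₂ → False := by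
    intro w h1 h2; exact hdisj' w (hS ▸ Or.inr ⟨h1, h2⟩)
  refine ⟨⟨?_, ?_⟩, ?_, ?_⟩
  · intro ⟨u, v⟩ h
    exact ⟨hsub h, hsub (hsym u v h)⟩
  · apply Set.eq_empty_of_subset_empty
    rw [← hdisj]
    exact fun p hp => ⟨hp.1.1, hp.2⟩
  · ext ⟨u, v⟩
    simp only [hS, Set.mem_inter_iff, Set.mem_union, Set.mem_prod, Set.mem_setOf_eq]
    constructor
    · rintro ⟨h1 | h1, h2 | h2⟩
      · exact (hA₁B₁ u h1.1 h2.2).elim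
      · exact Or.inl ⟨⟨h1.1, h2.2⟩, ⟨h1.2, h2.1⟩⟩
      · exact Or.inr ⟨⟨h2.2, h1.1⟩, ⟨h2.1, h1.2⟩⟩
      · exact (hA₂B₂ u h1.1 h2.2).elim
    · rintro (⟨⟨ha1, ha2⟩, ⟨hb1, hb2⟩⟩ | ⟨⟨hb1, hb2⟩, ⟨ha1, ha2⟩⟩)
      · exact ⟨Or.inl ⟨ha1, hb1⟩, Or.inr ⟨hb2, ha2⟩⟩
      · exact ⟨Or.inr ⟨hb2, ha2⟩, Or.inl ⟨ha1, hb1⟩⟩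
  · constructor
    · rintro ⟨X₁, Y₁, X₂, Y₂, hsub', hdisj''⟩
      have hd : ∀ w : List α, (w, w) ∉ (X₁ ×ˢ Y₁) ∪ (X₂ ×ˢ Y₂) := by
        intro w hw
        have : (w, w) ∈ ((X₁ ×ˢ Y₁) ∪ (X₂ ×ˢ Y₂)) ∩ IdRel α := ⟨hw, rfl⟩
        rw [hdisj''] at this; exact this
      refine ⟨X₁ ∩ Y₂, Y₁ ∩ X₂, ?_, ?_⟩
      · intro ⟨u, v⟩ h
        have h1 := hsub' h
        have h2 := hsub' (hsym u v h)
        rcases h1 with ⟨hu1, hv1⟩ | ⟨hu2, hv2⟩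
        · rcases h2 with ⟨hv1', hu1'⟩ | ⟨hv2', hu2'⟩
          · exact absurd (Or.inl ⟨hu1, hu1'⟩ :
              (u, u) ∈ (X₁ ×ˢ Y₁) ∪ (X₂ ×ˢ Y₂)) (hd u)
          · exact Or.inl ⟨⟨hu1, hu2'⟩, ⟨hv1, hv2'⟩⟩
        · rcases h2 with ⟨hv1', hu1'⟩ | ⟨hv2', hu2'⟩
          · exact Or.inr ⟨⟨hu1', hu2⟩, ⟨hv1', hv2⟩⟩
          · exact absurd (Or.inr ⟨hu2, hu2'⟩ :
              (u, u) ∈ (X₁ ×ˢ Y₁) ∪ (X₂ ×ˢ Y₂)) (hd u)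
      · apply Set.eq_empty_of_subset_empty
        rintro ⟨u, v⟩ ⟨hmem | hmem, heq⟩
        · refine absurd (Or.inl ⟨hmem.1.1, ?_⟩ :
            (u, u) ∈ (X₁ ×ˢ Y₁) ∪ (X₂ ×ˢ Y₂)) (hd u)
          rw [show u = v from heq]; exact hmem.2.1
        · refine absurd (Or.inr ⟨hmem.1.2, ?_⟩ :
            (u, u) ∈ (X₁ ×ˢ Y₁) ∪ (X₂ ×ˢ Y₂)) (hd u)
          rw [show u = v from heq]; exact hmem.2.2
    · rintro ⟨A, B, h1, h2⟩
      exact ⟨A, B, B, A, h1, h2⟩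
end

section
/- Let R ⊆ Σ* × Σ* and ∼_R the equivalence w ∼_R w' iff ∀v: ((w,v)∈R ⇔ (w',v)∈R) and ((v,w)∈R ⇔ (v,w')∈R). If R = (A₁ × B₁) ∪ ⋯ ∪ (A_k × B_k) and E is an equivalence class of ∼_R with A₁ ∩ E ≠ ∅, then R = ((A₁ ∪ E) × B₁) ∪ (A₂ × B₂) ∪ ⋯ ∪ (A_k × B_k). Consequently, R is a union of k products iff it is a union of k products where each factor is a union of ∼_R-classes. -/
/-- The equivalence `w ∼_R w'`: `w` and `w'` behave identically on both coordinates of `R`. -/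
def SimR {α : Type} (R : Set (List α × List α)) (w w' : List α) : Prop :=
  ∀ v : List α, ((w, v) ∈ R ↔ (w', v) ∈ R) ∧ ((v, w) ∈ R ↔ (v, w') ∈ R)

lemma SimR.trans' {α : Type} {R : Set (List α × List α)} {a b c : List α}
    (h1 : SimR R a b) (h2 : SimR R b c) : SimR R a c :=
  fun v => ⟨(h1 v).1.trans (h2 v).1, (h1 v).2.trans (h2 v).2⟩

lemma SimR.symm' {α : Type} {R : Set (List α × List α)} {a b : List α}
    (h : SimR R a b) : SimR R b a :=
  fun v => ⟨(h v).1.symm, (h v).2.symm⟩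

/-- If `R = ⋃ᵢ Aᵢ × Bᵢ` and `E` is a `∼_R`-class meeting `A₀`, then `A₀` may be enlarged to
`A₀ ∪ E` without changing the union. Consequently, `R` is a union of `n` products iff it is a
union of `n` products each of whose factors is a union of `∼_R`-classes. -/
theorem stmt13 (α : Type) (R : Set (List α × List α)) (k : ℕ)
    (A B : Fin (k + 1) → Set (List α)) (hR : R = ⋃ i, (A i ×ˢ B i))
    (w₀ : List α) (E : Set (List α)) (hE : E = {w' | SimR R w' w₀})
    (hmeet : (A 0 ∩ E).Nonempty) :
    R = ((A 0 ∪ E) ×ˢ B 0) ∪ ⋃ i ∈ {i : Fin (k + 1) | i ≠ 0}, (A i ×ˢ B i) ∧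
    (∀ n : ℕ,
      (∃ A' B' : Fin n → Set (List α), R = ⋃ i, (A' i ×ˢ B' i)) ↔
      (∃ A' B' : Fin n → Set (List α), R = (⋃ i, (A' i ×ˢ B' i)) ∧
        (∀ i, (∀ w ∈ A' i, ∀ w', SimR R w' w → w' ∈ A' i) ∧
              (∀ w ∈ B' i, ∀ w', SimR R w' w → w' ∈ B' i)))) := by
  obtain ⟨a, haA, haE⟩ := hmeet
  constructor
  · apply Set.Subset.antisymm
    · rw [hR]
      rintro ⟨x, y⟩ hxy
      simp only [Set.mem_iUnion] at hxy
      obtain ⟨i, hx, hy⟩ := hxy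
      by_cases hi : i = 0
      · subst hi
        exact Or.inl ⟨Or.inl hx, hy⟩
      · right
        simp only [Set.mem_iUnion]
        exact ⟨i, hi, hx, hy⟩
    · rintro ⟨x, y⟩ hxy
      rcases hxy with ⟨hx, hy⟩ | h
      · rcases hx with hx | hx
        · rw [hR]; simp only [Set.mem_iUnion]; exact ⟨0, hx, hy⟩
        · -- x ∈ E, so SimR R x w₀; a ∈ E, so SimR R a w₀; thus SimR R x a
          rw [hE] at hx haE
          have hxa : SimR R x a := hx.trans' haE.symm'
          have : (a, y) ∈ R := by rw [hR]; simp only [Set.mem_iUnion]; exact ⟨0, haA, hy⟩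
          exact (hxa y).1.mpr this
      · simp only [Set.mem_iUnion] at h
        obtain ⟨i, _, hx, hy⟩ := h
        rw [hR]; simp only [Set.mem_iUnion]; exact ⟨i, hx, hy⟩
  · intro n
    constructor
    · rintro ⟨A', B', hR'⟩
      refine ⟨fun i => {x | ∃ u ∈ A' i, SimR R x u}, fun i => {y | ∃ v ∈ B' i, SimR R y v},
        ?_, ?_⟩
      · apply Set.Subset.antisymm
        · rw [hR']
          rintro ⟨x, y⟩ hxy
          simp only [Set.mem_iUnion] at hxy ⊢
          obtain ⟨i, hx, hy⟩ := hxy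
          exact ⟨i, ⟨x, hx, fun v => ⟨Iff.rfl, Iff.rfl⟩⟩, ⟨y, hy, fun v => ⟨Iff.rfl, Iff.rfl⟩⟩⟩
        · rintro ⟨x, y⟩ hxy
          simp only [Set.mem_iUnion] at hxy
          obtain ⟨i, ⟨u, hu, hxu⟩, ⟨v, hv, hyv⟩⟩ := hxy
          have huv : (u, v) ∈ R := by rw [hR']; simp only [Set.mem_iUnion]; exact ⟨i, hu, hv⟩
          have hxv : (x, v) ∈ R := (hxu v).1.mpr huv
          exact (hyv x).2.mpr hxv
      · intro i
        constructor
        · rintro w ⟨u, hu, hwu⟩ w' hw'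
          exact ⟨u, hu, hw'.trans' hwu⟩
        · rintro w ⟨u, hu, hwu⟩ w' hw'
          exact ⟨u, hu, hw'.trans' hwu⟩
    · rintro ⟨A', B', hR', _⟩
      exact ⟨A', B', hR'⟩
end

section
/- Consider the tree T over alphabet {a,b} with vertex set V = a*b* (words of the form a^p b^q) and edge set E = E_incr ∪ E_init where E_incr = {(a^p b^q, a^{p+1} b^{q+1}) : p,q ∈ ℕ} and E_init = {(ε, a^p) : p ≥ 1} ∪ {(ε, b^q) : q ≥ 1}. Then (up to swapping the two colors) the unique 2-coloring of T is given by C = {aⁿbⁿ : n even} ∪ {a^p b^q : p > q, q odd} ∪ {a^p b^q : p < q, p odd} and its complement V \ C. -/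
/-- The word `a^p b^q` over the alphabet `{a, b} = Fin 2` (`a = 0`, `b = 1`). -/
def wrd (p q : ℕ) : List (Fin 2) := List.replicate p 0 ++ List.replicate q 1

/-- Vertex set `V = a* b*`. -/
def Vtree : Set (List (Fin 2)) := {w | ∃ p q, w = wrd p q}

/-- Edge set `E = E_incr ∪ E_init`. -/
def Etree : Set (List (Fin 2) × List (Fin 2)) :=
  {e | ∃ p q, e = (wrd p q, wrd (p + 1) (q + 1))} ∪
  ({e | ∃ p ≥ 1, e = ([], wrd p 0)} ∪ {e | ∃ q ≥ 1, e = ([], wrd 0 q)})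

/-- The color class `C`. -/
def Ctree : Set (List (Fin 2)) :=
  {w | ∃ n, Even n ∧ w = wrd n n} ∪
  {w | ∃ p q, p > q ∧ Odd q ∧ w = wrd p q} ∪
  {w | ∃ p q, p < q ∧ Odd p ∧ w = wrd p q}

lemma wrd_zero : wrd 0 0 = ([] : List (Fin 2)) := rfl

lemma wrd_inj {p q p' q' : ℕ} (h : wrd p q = wrd p' q') : p = p' ∧ q = q' := by
  have h0 := congrArg (List.count 0) h
  have h1 := congrArg (List.count 1) h
  simp [wrd, List.count_append, List.count_replicate] at h0 h1
  exact ⟨h0, h1⟩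

def Ptree (p q : ℕ) : Prop := (p = q ∧ Even p) ∨ (q < p ∧ Odd q) ∨ (p < q ∧ Odd p)

lemma mem_C (p q : ℕ) : wrd p q ∈ Ctree ↔ Ptree p q := by
  constructor
  · rintro ((⟨n, hn, h⟩ | ⟨p', q', hlt, hq, h⟩) | ⟨p', q', hlt, hp, h⟩) <;>
      obtain ⟨rfl, rfl⟩ := wrd_inj h
    · exact Or.inl ⟨rfl, hn⟩
    · exact Or.inr (Or.inl ⟨hlt, hq⟩)
    · exact Or.inr (Or.inr ⟨hlt, hp⟩)
  · rintro (⟨rfl, he⟩ | ⟨h, ho⟩ | ⟨h, ho⟩)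
    · exact Or.inl (Or.inl ⟨p, he, rfl⟩)
    · exact Or.inl (Or.inr ⟨p, q, h, ho, rfl⟩)
    · exact Or.inr ⟨p, q, h, ho, rfl⟩

lemma P_succ (p q : ℕ) : Ptree (p + 1) (q + 1) ↔ ¬ Ptree p q := by
  simp only [Ptree, Nat.even_iff, Nat.odd_iff]
  omega

lemma P_zero : Ptree 0 0 := Or.inl ⟨rfl, Even.zero⟩

lemma not_P_a {p : ℕ} (hp : 1 ≤ p) : ¬ Ptree p 0 := by
  simp only [Ptree, Nat.even_iff, Nat.odd_iff]; omega

lemma not_P_b {q : ℕ} (hq : 1 ≤ q) : ¬ Ptree 0 q := by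
  simp only [Ptree, Nat.even_iff, Nat.odd_iff]; omega

lemma C_sub_V : Ctree ⊆ Vtree := by
  rintro w ((⟨n, _, rfl⟩ | ⟨p, q, _, _, rfl⟩) | ⟨p, q, _, _, rfl⟩) <;> exact ⟨_, _, rfl⟩

lemma eps_mem_C : ([] : List (Fin 2)) ∈ Ctree := by
  rw [← wrd_zero, mem_C]; exact P_zero

lemma C_indep : (Ctree ×ˢ Ctree) ∩ Etree = ∅ := by
  rw [Set.eq_empty_iff_forall_notMem]
  rintro e ⟨⟨hu, hv⟩, (⟨p, q, rfl⟩ | ⟨p, hp, rfl⟩ | ⟨q, hq, rfl⟩)⟩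
  · simp only at hu hv
    rw [mem_C] at hu hv
    exact (P_succ p q).mp hv hu
  · simp only at hu hv
    rw [mem_C] at hv
    exact not_P_a hp hv
  · simp only at hu hv
    rw [mem_C] at hv
    exact not_P_b hq hv

lemma Cc_indep : ((Vtree \ Ctree) ×ˢ (Vtree \ Ctree)) ∩ Etree = ∅ := by
  rw [Set.eq_empty_iff_forall_notMem]
  rintro e ⟨⟨hu, hv⟩, (⟨p, q, rfl⟩ | ⟨p, hp, rfl⟩ | ⟨q, hq, rfl⟩)⟩
  · simp only at hu hv
    exact hv.2 ((mem_C _ _).mpr ((P_succ p q).mpr (fun h => hu.2 ((mem_C _ _).mpr h))))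
  · exact hu.2 eps_mem_C
  · exact hu.2 eps_mem_C

section Forced

variable {C₁ C₂ : Set (List (Fin 2))}

lemma edgeFlip (h1 : C₁ ∪ C₂ = Vtree) (h2 : C₁ ∩ C₂ = ∅)
    (h3 : (C₁ ×ˢ C₁) ∩ Etree = ∅) (h4 : (C₂ ×ˢ C₂) ∩ Etree = ∅)
    {u v : List (Fin 2)} (hu : u ∈ Vtree) (hv : v ∈ Vtree) (he : (u, v) ∈ Etree) :
    (u ∈ C₁ ↔ v ∉ C₁) := by
  rw [← h1] at hu hv
  have hd : ∀ x, x ∈ C₁ → x ∈ C₂ → False := by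
    intro x a b
    have : x ∈ C₁ ∩ C₂ := ⟨a, b⟩
    rw [h2] at this; exact this
  have n3 : ¬ (u ∈ C₁ ∧ v ∈ C₁) := by
    rintro ⟨a, b⟩
    have : (u, v) ∈ (C₁ ×ˢ C₁) ∩ Etree := ⟨⟨a, b⟩, he⟩
    rw [h3] at this; exact this
  have n4 : ¬ (u ∈ C₂ ∧ v ∈ C₂) := by
    rintro ⟨a, b⟩
    have : (u, v) ∈ (C₂ ×ˢ C₂) ∩ Etree := ⟨⟨a, b⟩, he⟩
    rw [h4] at this; exact this
  rcases hu with hu | hu <;> rcases hv with hv | hv <;> tauto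

lemma forced (h1 : C₁ ∪ C₂ = Vtree) (h2 : C₁ ∩ C₂ = ∅)
    (h3 : (C₁ ×ˢ C₁) ∩ Etree = ∅) (h4 : (C₂ ×ˢ C₂) ∩ Etree = ∅)
    (hε : ([] : List (Fin 2)) ∈ C₁) :
    C₁ = Ctree ∧ C₂ = Vtree \ Ctree := by
  have hεV : ([] : List (Fin 2)) ∈ Vtree := ⟨0, 0, wrd_zero.symm⟩
  have key : ∀ n p q, p + q ≤ n → (wrd p q ∈ C₁ ↔ Ptree p q) := by
    intro n
    induction n with
    | zero =>
      intro p q h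
      obtain rfl : p = 0 := by omega
      obtain rfl : q = 0 := by omega
      rw [wrd_zero]
      exact iff_of_true hε P_zero
    | succ n ih =>
      intro p q h
      match p, q with
      | 0, 0 => exact ih 0 0 (by omega)
      | p + 1, 0 =>
        have hf := edgeFlip h1 h2 h3 h4 hεV ⟨p + 1, 0, rfl⟩
          (Or.inr (Or.inl ⟨p + 1, by omega, rfl⟩))
        exact iff_of_false (hf.mp hε) (not_P_a (by omega))
      | 0, q + 1 =>
        have hf := edgeFlip h1 h2 h3 h4 hεV ⟨0, q + 1, rfl⟩
          (Or.inr (Or.inr ⟨q + 1, by omega, rfl⟩))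
        exact iff_of_false (hf.mp hε) (not_P_b (by omega))
      | p + 1, q + 1 =>
        have hf := edgeFlip h1 h2 h3 h4 ⟨p, q, rfl⟩ ⟨p + 1, q + 1, rfl⟩
          (Or.inl ⟨p, q, rfl⟩)
        rw [P_succ, ← ih p q (by omega)]
        tauto
  have hC1 : C₁ = Ctree := by
    ext w
    constructor
    · intro hw
      have hwV : w ∈ Vtree := by rw [← h1]; exact Or.inl hw
      obtain ⟨p, q, rfl⟩ := hwV
      rw [mem_C]
      exact (key (p + q) p q le_rfl).mp hw
    · intro hw
      obtain ⟨p, q, rfl⟩ := C_sub_V hw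
      exact (key (p + q) p q le_rfl).mpr ((mem_C p q).mp hw)
  refine ⟨hC1, ?_⟩
  ext w
  constructor
  · intro hw
    have hwV : w ∈ Vtree := by rw [← h1]; exact Or.inr hw
    refine ⟨hwV, fun hc => ?_⟩
    have : w ∈ C₁ ∩ C₂ := ⟨hC1 ▸ hc, hw⟩
    rw [h2] at this; exact this
  · rintro ⟨hwV, hc⟩
    rw [← h1] at hwV
    rcases hwV with hw | hw
    · exact absurd (hC1 ▸ hw) hc
    · exact hw

end Forced

/-- Up to swapping the colors, `(C, V \ C)` is the unique 2-coloring of the tree `T`. -/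
theorem stmt14 (C₁ C₂ : Set (List (Fin 2))) :
    (C₁ ∪ C₂ = Vtree ∧ C₁ ∩ C₂ = ∅ ∧ (C₁ ×ˢ C₁) ∩ Etree = ∅ ∧ (C₂ ×ˢ C₂) ∩ Etree = ∅) ↔
      ((C₁ = Ctree ∧ C₂ = Vtree \ Ctree) ∨ (C₁ = Vtree \ Ctree ∧ C₂ = Ctree)) := by
  constructor
  · rintro ⟨h1, h2, h3, h4⟩
    have hεV : ([] : List (Fin 2)) ∈ Vtree := ⟨0, 0, wrd_zero.symm⟩
    rw [← h1] at hεV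
    rcases hεV with h | h
    · exact Or.inl (forced h1 h2 h3 h4 h)
    · have := forced (by rw [Set.union_comm, h1]) (by rw [Set.inter_comm, h2]) h4 h3 h
      exact Or.inr ⟨this.2, this.1⟩
  · rintro (⟨rfl, rfl⟩ | ⟨rfl, rfl⟩)
    · refine ⟨Set.union_diff_cancel C_sub_V, ?_, C_indep, Cc_indep⟩
      ext x; simp only [Set.mem_inter_iff, Set.mem_diff, Set.mem_empty_iff_false, iff_false]
      tauto
    · refine ⟨?_, ?_, Cc_indep, C_indep⟩
      · rw [Set.union_comm]; exact Set.union_diff_cancel C_sub_V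
      · ext x; simp only [Set.mem_inter_iff, Set.mem_diff, Set.mem_empty_iff_false, iff_false]
        tauto
end
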